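/- arXiv:1407.6436 — 6 statements merged into one kernel-verified Lean document; each statement's English description precedes it below -/
import Mathlib

section
/- Let X = X₁ × ... × X_m (m > 1) be a direct product of finite groups whose factors are permuted transitively by a group G of automorphisms of X, and let V be a G-invariant subgroup of X. Then |V : [G,V]| ≤ |X|^{1/2}. -/
/-- The `i`-th direct factor of a direct product of groups, as a subgroup. -/
def factorSubgroup {ι : Type*} [DecidableEq ι] (X : ι → Type*) [∀ i, Group (X i)] (i : ι) :
    Subgroup (∀ j, X j) :=
  (MonoidHom.mulSingle X i).range

/-!
Choose `g ∈ G` moving every factor (Jordan's lemma) and let `C` be the fixed points of `α = φ g`.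
Since `v ↦ v * (α v)⁻¹` is constant exactly on the cosets of `C ∩ V` and lands in `[G, V]`,
`|V : [G, V]| ≤ |C|`. An element of `C` is determined by its coordinates on any set of indices
meeting every cycle of the permutation induced by `g`, because `α` carries the coordinate at `i`
to the coordinate at `g i`. As `g` has no fixed indices, the complement of a set of cycle
representatives meets every cycle as well, so `C × C` embeds into `X`.
-/

open MulAction in
/-- Jordan's lemma: by Burnside's lemma the fixed-point counts average to one, and the identity
fixes more than one point. -/
theorem MulAction.exists_forall_smul_ne {M α : Type*} [Group M] [Finite M] [Finite α]
    [MulAction M α] [IsPretransitive M α] (h : 1 < Nat.card α) :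
    ∃ m : M, ∀ a : α, m • a ≠ a := by
  classical
  by_contra! hfix
  have : Nonempty α := (Nat.card_pos_iff.mp (by omega)).1
  cases nonempty_fintype M
  cases nonempty_fintype α
  obtain ⟨_⟩ := (pretransitive_iff_unique_quotient_of_nonempty M α).mp inferInstance
  have hburnside := sum_card_fixedBy_eq_card_orbits_mul_card_group M α
  rw [Fintype.card_unique, one_mul] at hburnside
  have hlt : ∑ _m : M, 1 < ∑ m : M, Fintype.card (fixedBy α m) := by
    refine Finset.sum_lt_sum (fun m _ ↦ Fintype.card_pos_iff.2 ?_) ⟨1, Finset.mem_univ _, ?_⟩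
    · obtain ⟨a, ha⟩ := hfix m
      exact ⟨⟨a, ha⟩⟩
    · simpa [fixedBy_one_eq_univ, Nat.card_eq_fintype_card] using h
  simp only [Finset.sum_const, Finset.card_univ, smul_eq_mul, mul_one] at hlt
  omega

section FixedPoints

variable {H : Type*} [Group H]

def MonoidHom.fixedSubgroup (α : H →* H) : Subgroup H :=
  α.eqLocus (MonoidHom.id H)

variable [Finite H] (α : H →* H)

theorem MonoidHom.index_fixedSubgroup_le_card {K : Subgroup H} (hK : ∀ h, h⁻¹ * α h ∈ K) :
    α.fixedSubgroup.index ≤ Nat.card K := by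
  have twist_eq_iff (a b : H) : a * (α a)⁻¹ = b * (α b)⁻¹ ↔ α (a⁻¹ * b) = a⁻¹ * b := by
    rw [map_mul, map_inv]
    constructor <;> intro h
    · simpa [mul_assoc] using congrArg (fun t ↦ a⁻¹ * t * α b) h
    · simpa [mul_assoc] using congrArg (fun t ↦ a * t * (α b)⁻¹) h
  let twist : H ⧸ α.fixedSubgroup → K :=
    Quotient.lift (fun h ↦ ⟨h * (α h)⁻¹, by simpa using hK h⁻¹⟩) fun a b hab ↦
      Subtype.ext ((twist_eq_iff a b).2 (QuotientGroup.leftRel_apply.mp hab))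
  refine Nat.card_le_card_of_injective twist ?_
  rintro ⟨a⟩ ⟨b⟩ hab
  exact Quotient.sound
    (QuotientGroup.leftRel_apply.mpr ((twist_eq_iff a b).1 (congrArg Subtype.val hab)))

theorem MonoidHom.index_le_card_fixedSubgroup {K : Subgroup H} (hK : ∀ h, h⁻¹ * α h ∈ K) :
    K.index ≤ Nat.card α.fixedSubgroup := by
  have hK_pos : 0 < Nat.card K := Nat.card_pos
  refine Nat.le_of_mul_le_mul_right ?_ hK_pos
  calc K.index * Nat.card K = α.fixedSubgroup.index * Nat.card α.fixedSubgroup := by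
        rw [Subgroup.index_mul_card, Subgroup.index_mul_card]
    _ ≤ Nat.card K * Nat.card α.fixedSubgroup :=
        Nat.mul_le_mul_right _ (α.index_fixedSubgroup_le_card hK)
    _ = _ := mul_comm _ _

theorem MonoidHom.relIndex_le_card_fixedSubgroup {V W : Subgroup H} (hV : V.map α ≤ V)
    (hW : ∀ v ∈ V, v⁻¹ * α v ∈ W) :
    W.relIndex V ≤ Nat.card α.fixedSubgroup := by
  let αV : V →* V := (α.comp V.subtype).codRestrict V fun v ↦ hV ⟨v, v.2, rfl⟩
  calc W.relIndex V ≤ Nat.card αV.fixedSubgroup :=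
        αV.index_le_card_fixedSubgroup fun v ↦ hW v v.2
    _ ≤ Nat.card α.fixedSubgroup :=
        Nat.card_le_card_of_injective (fun v ↦ ⟨v.1.1, congrArg Subtype.val v.2⟩) <| by
          rintro ⟨⟨v, _⟩, _⟩ ⟨⟨w, _⟩, _⟩ h
          obtain rfl : v = w := congrArg Subtype.val h
          rfl

end FixedPoints

namespace Equiv.Perm

variable {ι : Type*}

def MeetsEveryCycle (σ : Perm ι) (A : Set ι) : Prop :=
  ∀ j, ∃ i ∈ A, σ.SameCycle i j

theorem exists_meetsEveryCycle_and_compl {σ : Perm ι} (hσ : ∀ i, σ i ≠ i) :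
    ∃ A : Set ι, σ.MeetsEveryCycle A ∧ σ.MeetsEveryCycle Aᶜ := by
  let cycles := Quotient (SameCycle.setoid σ)
  have out_mk (j : ι) : σ.SameCycle (Quotient.mk _ j : cycles).out j :=
    Quotient.mk_out (s := SameCycle.setoid σ) j
  refine ⟨Set.range (Quotient.out : cycles → ι), fun j ↦ ⟨_, Set.mem_range_self _, out_mk j⟩,
    fun j ↦ ?_⟩
  by_cases hj : j ∈ Set.range (Quotient.out : cycles → ι)
  · refine ⟨σ j, ?_, ⟨-1, by simp⟩⟩
    rintro ⟨c, hc⟩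
    obtain ⟨d, rfl⟩ := hj
    have : c = d := by
      rw [← Quotient.out_eq c, ← Quotient.out_eq d, hc]
      exact Quotient.sound ⟨-1, by simp⟩
    exact hσ d.out (by rw [← hc, this])
  · exact ⟨j, hj, SameCycle.refl σ j⟩

theorem MeetsEveryCycle.eq_of_eqOn [Finite ι] {X : ι → Type*} {σ : Perm ι} {A : Set ι}
    (hA : σ.MeetsEveryCycle A) {x y : ∀ i, X i}
    (hstep : ∀ i, x i = y i → x (σ i) = y (σ i)) (hxy : ∀ i ∈ A, x i = y i) : x = y := by
  have hmaps : Set.MapsTo σ {i | x i = y i} {i | x i = y i} := fun i ↦ hstep i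
  funext j
  obtain ⟨i, hi, hij⟩ := hA j
  obtain ⟨k, -, rfl⟩ := hij.exists_pow_eq'
  rw [coe_pow]
  exact hmaps.iterate k (hxy i hi)

end Equiv.Perm

section Factors

variable {ι : Type*} [DecidableEq ι] {X : ι → Type*} [∀ i, Group (X i)]

theorem apply_eq_one_of_mem_factorSubgroup {i j : ι} (hji : j ≠ i) {x : ∀ i, X i}
    (hx : x ∈ factorSubgroup X i) : x j = 1 := by
  obtain ⟨a, rfl⟩ := hx
  exact Pi.mulSingle_eq_of_ne hji a

variable [Finite ι] {α : (∀ i, X i) →* ∀ i, X i} {σ : Equiv.Perm ι}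

theorem apply_perm_eq_apply_mulSingle
    (hα : ∀ i, (factorSubgroup X i).map α ≤ factorSubgroup X (σ i)) (x : ∀ i, X i) (i : ι) :
    α x (σ i) = α (Pi.mulSingle i (x i)) (σ i) := by
  suffices (Pi.evalMonoidHom X (σ i)).comp α =
      ((Pi.evalMonoidHom X (σ i)).comp (α.comp (MonoidHom.mulSingle X i))).comp
        (Pi.evalMonoidHom X i) from DFunLike.congr_fun this x
  refine MonoidHom.pi_ext fun j a ↦ ?_
  rcases eq_or_ne j i with rfl | hji
  · simp
  · have hmem : α (Pi.mulSingle j a) ∈ factorSubgroup X (σ j) := hα j ⟨_, ⟨a, rfl⟩, rfl⟩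
    simp [apply_eq_one_of_mem_factorSubgroup (σ.injective.ne hji.symm) hmem,
      Pi.mulSingle_eq_of_ne hji.symm]

theorem card_fixedSubgroup_sq_le [∀ i, Finite (X i)]
    (hα : ∀ i, (factorSubgroup X i).map α ≤ factorSubgroup X (σ i)) (hσ : ∀ i, σ i ≠ i) :
    Nat.card α.fixedSubgroup ^ 2 ≤ Nat.card (∀ i, X i) := by
  classical
  obtain ⟨A, hA, hAc⟩ := Equiv.Perm.exists_meetsEveryCycle_and_compl hσ
  have hstep {x y : ∀ i, X i} (hx : α x = x) (hy : α y = y) (i : ι) (hi : x i = y i) :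
      x (σ i) = y (σ i) := by
    rw [← hx, ← hy, apply_perm_eq_apply_mulSingle hα x, apply_perm_eq_apply_mulSingle hα y, hi]
  rw [sq, ← Nat.card_prod]
  refine Nat.card_le_card_of_injective (fun p ↦ A.piecewise p.1 p.2) ?_
  rintro ⟨⟨x, hx⟩, ⟨y, hy⟩⟩ ⟨⟨x', hx'⟩, ⟨y', hy'⟩⟩ h
  have hxx' : x = x' := hA.eq_of_eqOn (hstep hx hx') fun i hi ↦ by
    simpa [Set.piecewise_eq_of_mem _ _ _ hi] using congrFun h i
  have hyy' : y = y' := hAc.eq_of_eqOn (hstep hy hy') fun i hi ↦ by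
    simpa [Set.piecewise_eq_of_notMem _ _ _ hi] using congrFun h i
  subst hxx' hyy'
  rfl

end Factors

theorem relindex_commutator_sq_le_card
    {ι : Type*} [Finite ι] [DecidableEq ι] (X : ι → Type*)
    [∀ i, Group (X i)] [∀ i, Finite (X i)] (hm : 1 < Nat.card ι)
    {G : Type*} [Group G] (φ : G →* MulAut (∀ i, X i)) (ρ : G →* Equiv.Perm ι)
    (hperm : ∀ (g : G) (i : ι),
      Subgroup.map (φ g).toMonoidHom (factorSubgroup X i) = factorSubgroup X (ρ g i))
    (htrans : ∀ i j : ι, ∃ g : G, ρ g i = j)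
    (V : Subgroup (∀ i, X i))
    (hV : ∀ g : G, Subgroup.map (φ g).toMonoidHom V = V) :
    ((Subgroup.closure {x : ∀ i, X i | ∃ (g : G) (v : ∀ i, X i), v ∈ V ∧ x = v⁻¹ * φ g v}).relIndex V) ^ 2
      ≤ Nat.card (∀ i, X i) := by
  have : MulAction.IsPretransitive ρ.range ι :=
    ⟨fun i j ↦ by obtain ⟨g, hg⟩ := htrans i j; exact ⟨⟨ρ g, g, rfl⟩, hg⟩⟩
  obtain ⟨⟨_, g, rfl⟩, hg⟩ := MulAction.exists_forall_smul_ne (M := ρ.range) hm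
  calc _ ≤ Nat.card (φ g).toMonoidHom.fixedSubgroup ^ 2 :=
        Nat.pow_le_pow_left ((φ g).toMonoidHom.relIndex_le_card_fixedSubgroup (hV g).le
          fun v hv ↦ by exact Subgroup.subset_closure ⟨g, v, hv, rfl⟩) 2
    _ ≤ Nat.card (∀ i, X i) := card_fixedSubgroup_sq_le (fun i ↦ (hperm g i).le) hg
end

section
/- Let G be a finite group with a normal series G = G₀ ≥ G₁ ≥ ... ≥ G_n = 1 where each G_i is normal in G. Then |G : G'| divides, and in particular is at most, the product over i of |H_i : H_i'|, where H_i = G_i/G_{i+1}. -/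
/-!
Put `Dᵢ = G' ⊔ Gᵢ`. These subgroups contain `G'`, hence are normal, and they descend from `G`
to `G'`, so `|G : G'|` is the product of the successive indices `|Dᵢ : Dᵢ₊₁|`. Since
`Dᵢ = Dᵢ₊₁ ⊔ Gᵢ`, the second isomorphism theorem gives `|Dᵢ : Dᵢ₊₁| = |Gᵢ : Dᵢ₊₁ ⊓ Gᵢ|`, and
`Dᵢ₊₁ ⊓ Gᵢ` contains `Gᵢ' ⊔ Gᵢ₊₁`, whose index in `Gᵢ` is `|Hᵢ : Hᵢ'|`.
-/

namespace Subgroup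

variable {G : Type*} [Group G]

theorem relIndex_last_eq_prod_relIndex :
    ∀ (n : ℕ) (D : Fin (n + 1) → Subgroup G), (∀ i : Fin n, D i.succ ≤ D i.castSucc) →
      (D (Fin.last n)).relIndex (D 0) = ∏ i : Fin n, (D i.succ).relIndex (D i.castSucc)
  | 0, D, _ => by simp
  | n + 1, D, hle => by
    have hanti : Antitone D := Fin.antitone_iff_succ_le.mpr hle
    have ih := relIndex_last_eq_prod_relIndex n (fun i => D i.succ) fun i => by
      simpa only [Fin.succ_castSucc] using hle i.succ
    simp only [Fin.succ_last, Fin.succ_castSucc, Fin.succ_zero_eq_one] at ih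
    rw [Fin.prod_univ_succ, ← ih, Fin.succ_zero_eq_one, Fin.castSucc_zero, mul_comm,
      relIndex_mul_relIndex _ _ _ (hanti (Fin.le_last 1)) (hanti (Fin.zero_le 1))]

theorem relIndex_commutator_sup_dvd {A B : Subgroup G} (hBA : B ≤ A) :
    (_root_.commutator G ⊔ B).relIndex (_root_.commutator G ⊔ A) ∣ (⁅A, A⁆ ⊔ B).relIndex A := by
  have : (_root_.commutator G ⊔ B).Normal := Normal.of_commutator_le G le_sup_left
  have hsup : _root_.commutator G ⊔ A = (_root_.commutator G ⊔ B) ⊔ A := by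
    rw [sup_assoc, sup_eq_right.mpr hBA]
  rw [hsup, relIndex_sup_left]
  exact relIndex_dvd_of_le_left _ (sup_le_sup_right (commutator_mono le_top le_top) B)

end Subgroup

open Subgroup in
theorem commutator_index_dvd_prod_of_normal_series_general
    {G : Type*} [Group G] [Finite G] (n : ℕ) (c : Fin (n + 1) → Subgroup G)
    (h0 : c 0 = ⊤) (hn : c (Fin.last n) = ⊥)
    (hle : ∀ i : Fin n, c i.succ ≤ c i.castSucc) :
    ((commutator G).index ∣
        ∏ i : Fin n, (⁅c i.castSucc, c i.castSucc⁆ ⊔ c i.succ).relIndex (c i.castSucc)) ∧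
      (commutator G).index ≤
        ∏ i : Fin n, (⁅c i.castSucc, c i.castSucc⁆ ⊔ c i.succ).relIndex (c i.castSucc) := by
  have hindex : (commutator G).index =
      ∏ i : Fin n, (commutator G ⊔ c i.succ).relIndex (commutator G ⊔ c i.castSucc) := by
    rw [← relIndex_last_eq_prod_relIndex n (fun i => commutator G ⊔ c i)
      fun i => sup_le_sup_left (hle i) _]
    simp [h0, hn, relIndex_top_right]
  have hdvd : (commutator G).index ∣
      ∏ i : Fin n, (⁅c i.castSucc, c i.castSucc⁆ ⊔ c i.succ).relIndex (c i.castSucc) := by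
    rw [hindex]
    exact Finset.prod_dvd_prod_of_dvd _ _ fun i _ => relIndex_commutator_sup_dvd (hle i)
  have hpos :
      0 < ∏ i : Fin n, (⁅c i.castSucc, c i.castSucc⁆ ⊔ c i.succ).relIndex (c i.castSucc) :=
    Finset.prod_pos fun _ _ => Nat.pos_of_ne_zero index_ne_zero_of_finite
  exact ⟨hdvd, Nat.le_of_dvd hpos hdvd⟩

theorem commutator_index_dvd_prod_of_normal_series
    {G : Type*} [Group G] [Finite G] (n : ℕ) (c : Fin (n + 1) → Subgroup G)
    (h0 : c 0 = ⊤) (hn : c (Fin.last n) = ⊥)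
    (hnorm : ∀ i, (c i).Normal)
    (hle : ∀ i : Fin n, c i.succ ≤ c i.castSucc) :
    ((commutator G).index ∣
        ∏ i : Fin n, (⁅c i.castSucc, c i.castSucc⁆ ⊔ c i.succ).relIndex (c i.castSucc)) ∧
      (commutator G).index ≤
        ∏ i : Fin n, (⁅c i.castSucc, c i.castSucc⁆ ⊔ c i.succ).relIndex (c i.castSucc) :=
  commutator_index_dvd_prod_of_normal_series_general n c h0 hn hle
end

section
/- Let T = A ∘_Z F be a central product of finite groups A and F over a common central subgroup Z ≤ Z(A) ∩ Z(F), with A/Z abelian. Let Z₁ = A', Z₂ = F' ∩ Z, Z₀ = Z₁ ∩ Z₂. Then T' = Z₁ ∘_{Z₀} F' and |T : T'| = |A/Z| · |F : F'| / |Z₁ : Z₀|. -/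
/-!
As `A` and `F` commute elementwise, `(a, f) ↦ a * f` maps `A × F` onto `T`, and commutators in
`A × F` are computed coordinatewise; so `T'` is the image of `A' × F'`, namely `A'F'`.
For the index, `F` and `F'` are normal, so `|T : A'F'| |A'F' : F'| = |T : F'| = |T : F| |F : F'|`,
and the second isomorphism theorem gives `|T : F| = |A : A ∩ F|` and `|A'F' : F'| = |A' : A' ∩ F'|`.
Finally `A' ≤ Z` makes `A' ∩ F' = A' ∩ (F' ∩ Z)`.
-/

open Subgroup

namespace Subgroup

variable {G : Type*} [Group G]

theorem normal_of_sup_eq_top_of_le_centralizer {A F : Subgroup G} (hAF : A ⊔ F = ⊤)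
    (hcent : A ≤ centralizer F) : F.Normal := by
  have hA : A ≤ normalizer F :=
    le_normalizer_iff_commutator_le_right.mpr
      ((commutator_eq_bot_iff_le_centralizer.mpr hcent).symm ▸ bot_le)
  rw [← normalizer_eq_top_iff, eq_top_iff, ← hAF]
  exact sup_le hA le_normalizer

theorem map_noncommCoprod_prod {M N : Type*} [Group M] [Group N] (f : M →* G) (g : N →* G)
    (comm : ∀ m n, Commute (f m) (g n)) (H : Subgroup M) (K : Subgroup N) :
    (H.prod K).map (f.noncommCoprod g comm) = H.map f ⊔ K.map g := by
  apply le_antisymm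
  · rintro - ⟨⟨m, n⟩, ⟨hm, hn⟩, rfl⟩
    exact mul_mem (mem_sup_left (mem_map_of_mem f hm)) (mem_sup_right (mem_map_of_mem g hn))
  · refine sup_le ?_ ?_
    · rintro - ⟨m, hm, rfl⟩
      exact ⟨(m, 1), ⟨hm, one_mem K⟩, by simp⟩
    · rintro - ⟨n, hn, rfl⟩
      exact ⟨(1, n), ⟨one_mem H, hn⟩, by simp⟩

theorem commutator_sup_of_le_centralizer {A F : Subgroup G} (hcent : A ≤ centralizer F) :
    ⁅A ⊔ F, A ⊔ F⁆ = ⁅A, A⁆ ⊔ ⁅F, F⁆ := by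
  have comm (a : A) (f : F) : Commute (A.subtype a) (F.subtype f) :=
    (mem_centralizer_iff.mp (hcent a.2) f f.2).symm
  have hrange :
      A ⊔ F = (⊤ : Subgroup (A × F)).map (A.subtype.noncommCoprod F.subtype comm) := by
    rw [← MonoidHom.range_eq_map, MonoidHom.noncommCoprod_range, A.range_subtype, F.range_subtype]
  rw [hrange, ← map_commutator, ← top_prod_top, commutator_prod_prod, map_noncommCoprod_prod,
    ← _root_.commutator_def, ← _root_.commutator_def, map_subtype_commutator,
    map_subtype_commutator]

theorem index_sup_mul_relIndex_inf {A F A₁ F₁ : Subgroup G} [F.Normal] [F₁.Normal]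
    (hAF : A ⊔ F = ⊤) (hF₁ : F₁ ≤ F) :
    (A₁ ⊔ F₁).index * (A₁ ⊓ F₁).relIndex A₁ =
      (A ⊓ F).relIndex A * F₁.relIndex F := by
  have hF : F.index = (A ⊓ F).relIndex A := by
    rw [← relIndex_top_right, ← hAF, relIndex_sup_right, ← inf_relIndex_right, inf_comm]
  have hrel : F₁.relIndex (A₁ ⊔ F₁) = (A₁ ⊓ F₁).relIndex A₁ := by
    rw [relIndex_sup_right, ← inf_relIndex_right, inf_comm]
  calc (A₁ ⊔ F₁).index * (A₁ ⊓ F₁).relIndex A₁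
      = F₁.relIndex (A₁ ⊔ F₁) * (A₁ ⊔ F₁).index := by rw [hrel, mul_comm]
    _ = F₁.relIndex F * F.index := by
      rw [relIndex_mul_index le_sup_right, relIndex_mul_index hF₁]
    _ = (A ⊓ F).relIndex A * F₁.relIndex F := by rw [hF, mul_comm]

end Subgroup

theorem central_product_commutator_and_index_general
    {T : Type*} [Group T] (A F Z : Subgroup T)
    (hcomm : ∀ a ∈ A, ∀ f ∈ F, Commute a f)
    (hAF : A ⊔ F = ⊤) (hint : A ⊓ F = Z)
    (habel : ⁅A, A⁆ ≤ Z) :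
    commutator T = ⁅A, A⁆ ⊔ ⁅F, F⁆ ∧
      ⁅A, A⁆ ⊓ ⁅F, F⁆ = ⁅A, A⁆ ⊓ (⁅F, F⁆ ⊓ Z) ∧
      (commutator T).index * ((⁅A, A⁆ ⊓ (⁅F, F⁆ ⊓ Z)).relIndex ⁅A, A⁆)
        = Z.relIndex A * (⁅F, F⁆).relIndex F := by
  have hcent : A ≤ centralizer F := fun a ha =>
    mem_centralizer_iff.mpr fun f hf => (hcomm a ha f hf).eq.symm
  have : F.Normal := normal_of_sup_eq_top_of_le_centralizer hAF hcent
  have hT : commutator T = ⁅A, A⁆ ⊔ ⁅F, F⁆ := by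
    rw [_root_.commutator_def, ← hAF, commutator_sup_of_le_centralizer hcent]
  have hZ₀ : ⁅A, A⁆ ⊓ ⁅F, F⁆ = ⁅A, A⁆ ⊓ (⁅F, F⁆ ⊓ Z) := by
    rw [← inf_assoc, inf_eq_left.mpr (inf_le_left.trans habel)]
  refine ⟨hT, hZ₀, ?_⟩
  rw [hT, ← hZ₀, ← hint]
  exact index_sup_mul_relIndex_inf hAF (commutator_le_self F)

theorem central_product_commutator_and_index
    {T : Type*} [Group T] [Finite T] (A F Z : Subgroup T)
    (hZA : Z ≤ A) (hZF : Z ≤ F)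
    (hZcA : Z ≤ Subgroup.centralizer (A : Set T))
    (hZcF : Z ≤ Subgroup.centralizer (F : Set T))
    (hcomm : ∀ a ∈ A, ∀ f ∈ F, Commute a f)
    (hAF : A ⊔ F = ⊤) (hint : A ⊓ F = Z)
    (habel : ⁅A, A⁆ ≤ Z) :
    commutator T = ⁅A, A⁆ ⊔ ⁅F, F⁆ ∧
      ⁅A, A⁆ ⊓ ⁅F, F⁆ = ⁅A, A⁆ ⊓ (⁅F, F⁆ ⊓ Z) ∧
      (commutator T).index * ((⁅A, A⁆ ⊓ (⁅F, F⁆ ⊓ Z)).relIndex ⁅A, A⁆)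
        = Z.relIndex A * (⁅F, F⁆).relIndex F :=
  central_product_commutator_and_index_general A F Z hcomm hAF hint habel
end

section
/- Let G be a finite group acting faithfully and transitively by conjugation on the m direct factors of N = L₁ × ... × L_m (nonabelian simple, m ≥ 1), with K = ∩_i N_G(L_i). Then |G : G'K| ≤ 2^{m-1}. -/
/-!
Conjugation permutes the subgroups `L i`, and `⨅ i, normalizer (L i)` is the kernel `K` of this
action on the set `{L i}` of at most `m` points. So it suffices that a finite group `G` acting on
`n` points satisfies `|G : G'K| ≤ 2 ^ (n - b)`, where `b` is the number of orbits.

This goes by induction on `|G|`. Take a point `ω` whose stabilizer `H` is proper, and put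
`J = G'K` and `M = J H`; both contain `G'`, so they are normal. Then
`|G : J| = |G : M| · |H : J ∩ H|`, and the second factor is bounded by induction because
`J ∩ H ⊇ H' K_H`. Since `M` is normal and contains `H`, the `G`-orbit of `ω` splits into
`|G : M|` orbits of `M`, so `H ≤ M` has at least `|G : M| - 1` more orbits than `G`; this pays
for the factor `|G : M| ≤ 2 ^ (|G : M| - 1)`.
-/

open Pointwise

theorem Function.Surjective.card_add_ncard_preimage_singleton_le {α β : Type*} [Finite α]
    {f : α → β} (hf : f.Surjective) (b : β) :
    Nat.card β + (f ⁻¹' {b}).ncard ≤ Nat.card α + 1 := by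
  have : Finite β := .of_surjective f hf
  have hα := (f ⁻¹' {b}).ncard_add_ncard_compl
  have hβ := ({b} : Set β).ncard_add_ncard_compl
  have hcompl := Set.ncard_image_le (f := f) (s := f ⁻¹' {b}ᶜ) (Set.toFinite _)
  rw [Set.image_preimage_eq _ hf, Set.preimage_compl] at hcompl
  rw [Set.ncard_singleton] at hβ
  omega

namespace MulAction

open Subgroup

variable {G Ω : Type*} [Group G] [MulAction G Ω]

theorem card_orbitRel_quotient_le_of_le {H K : Subgroup G} (hHK : H ≤ K)
    [Finite (orbitRel.Quotient H Ω)] :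
    Nat.card (orbitRel.Quotient K Ω) ≤ Nat.card (orbitRel.Quotient H Ω) :=
  Nat.card_le_card_of_surjective _ <|
    Quotient.map_surjective (sa := orbitRel H Ω) (sb := orbitRel K Ω) (f := id)
      (fun _ _ ⟨h, hh⟩ ↦ ⟨⟨h, hHK h.2⟩, hh⟩) Function.surjective_id

theorem card_orbitRel_quotient_add_index_le [Finite Ω] {M : Subgroup G} [hM : M.Normal] {ω : Ω}
    (hstab : stabilizer G ω ≤ M) :
    Nat.card (orbitRel.Quotient G Ω) + M.index ≤ Nat.card (orbitRel.Quotient M Ω) + 1 := by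
  let f : orbitRel.Quotient M Ω → orbitRel.Quotient G Ω :=
    Quotient.map id fun _ _ ↦ (orbitRel_subgroup_le M ·)
  -- `gM ↦ M • g • ω` enumerates the `M`-orbits inside the `G`-orbit of `ω`.
  let φ : G ⧸ M → orbitRel.Quotient M Ω := Quotient.map (· • ω) fun a b hab ↦ by
    have hmem := hM.conj_mem _ (inv_mem (QuotientGroup.leftRel_apply.mp hab)) b
    refine ⟨⟨_, hmem⟩, ?_⟩
    simp only [Subgroup.mk_smul, smul_smul]
    congr 1
    group
  have hφ : φ.Injective := by
    rintro ⟨a⟩ ⟨b⟩ hab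
    obtain ⟨⟨m, hm⟩, hmab⟩ := Quotient.exact hab
    have hstab_mem : a⁻¹ * m * b ∈ stabilizer G ω := by
      rw [mem_stabilizer_iff, mul_smul, mul_smul]
      exact inv_smul_eq_iff.mpr hmab
    refine Quotient.sound (QuotientGroup.leftRel_apply.mpr ?_)
    have hconj : a⁻¹ * m * a ∈ M := by simpa using hM.conj_mem m hm a⁻¹
    refine (M.mul_mem_cancel_left hconj).mp ?_
    convert hstab hstab_mem using 1
    group
  have hφf : Set.range φ ⊆ f ⁻¹' {⟦ω⟧} := by
    rintro _ ⟨⟨a⟩, rfl⟩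
    exact Quotient.sound ⟨a, rfl⟩
  calc Nat.card (orbitRel.Quotient G Ω) + M.index
      = Nat.card (orbitRel.Quotient G Ω) + (Set.range φ).ncard := by
        rw [Set.ncard_range_of_injective hφ, index_eq_card]
    _ ≤ Nat.card (orbitRel.Quotient G Ω) + (f ⁻¹' {⟦ω⟧}).ncard :=
        Nat.add_le_add_left (Set.ncard_le_ncard hφf (Set.toFinite _)) _
    _ ≤ _ :=
        (Quotient.map_surjective _ Function.surjective_id).card_add_ncard_preimage_singleton_le _

theorem relIndex_commutator_sup_iInf_stabilizer_le [Finite G] (H : Subgroup G) :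
    (commutator G ⊔ ⨅ ω : Ω, stabilizer G ω).relIndex H ≤
      (commutator H ⊔ ⨅ ω : Ω, stabilizer H ω).index := by
  refine index_antitone (sup_le ?_ ?_)
  · rw [subgroupOf, ← map_le_iff_le_comap, map_subtype_commutator]
    exact (commutator_mono le_top le_top).trans le_sup_left
  · intro h hh
    simp only [mem_iInf, mem_stabilizer_iff] at hh
    exact mem_sup_right (mem_iInf.mpr hh)

theorem index_commutator_sup_iInf_stabilizer_le_two_pow [Finite G] [Finite Ω] :
    (commutator G ⊔ ⨅ ω : Ω, stabilizer G ω).index ≤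
      2 ^ (Nat.card Ω - Nat.card (orbitRel.Quotient G Ω)) := by
  induction hn : Nat.card G using Nat.strong_induction_on generalizing G with
  | _ n ih =>
  set J := commutator G ⊔ ⨅ ω : Ω, stabilizer G ω
  by_cases hfix : ∀ ω : Ω, stabilizer G ω = ⊤
  · simp [J, hfix, Nat.one_le_two_pow]
  push Not at hfix
  obtain ⟨ω, hω⟩ := hfix
  set H := stabilizer G ω
  have : J.Normal := .of_commutator_le G le_sup_left
  set M := J ⊔ H
  have : M.Normal := .of_commutator_le G (le_sup_left.trans le_sup_left)
  have hcard : Nat.card H < n :=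
    hn ▸ H.card_le_card_group.lt_of_ne (mt (card_eq_iff_eq_top H).mp hω)
  have hH := ih _ hcard (G := H) rfl
  have hsplit := card_orbitRel_quotient_add_index_le (M := M) (ω := ω) le_sup_right
  have hmono := card_orbitRel_quotient_le_of_le (Ω := Ω) (K := M) le_sup_right
  have horbH : Nat.card (orbitRel.Quotient H Ω) ≤ Nat.card Ω :=
    Nat.card_le_card_of_surjective _ Quotient.mk_surjective
  have hM₀ : M.index ≠ 0 := index_ne_zero_of_finite
  have hM : M.index ≤ 2 ^ (M.index - 1) := by
    have := Nat.lt_two_pow_self (n := M.index - 1)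
    omega
  calc J.index = J.relIndex M * M.index := (relIndex_mul_index le_sup_left).symm
    _ = J.relIndex H * M.index := by rw [relIndex_sup_left]
    _ ≤ 2 ^ (Nat.card Ω - Nat.card (orbitRel.Quotient H Ω)) * 2 ^ (M.index - 1) :=
        Nat.mul_le_mul ((relIndex_commutator_sup_iInf_stabilizer_le H).trans hH) hM
    _ ≤ 2 ^ (Nat.card Ω - Nat.card (orbitRel.Quotient G Ω)) := by
        rw [← pow_add]
        exact Nat.pow_le_pow_right two_pos (by omega)

theorem index_commutator_sup_iInf_stabilizer_le_two_pow_card_sub_one [Finite G] [Finite Ω] :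
    (commutator G ⊔ ⨅ ω : Ω, stabilizer G ω).index ≤ 2 ^ (Nat.card Ω - 1) := by
  refine index_commutator_sup_iInf_stabilizer_le_two_pow.trans <|
    Nat.pow_le_pow_right two_pos ?_
  rcases isEmpty_or_nonempty Ω with _ | hΩ
  · simp
  · have := hΩ.map (Quotient.mk (orbitRel G Ω))
    have : 0 < Nat.card (orbitRel.Quotient G Ω) := Nat.card_pos
    omega

end MulAction

theorem index_commutator_sup_kernel_le_two_pow_general
    {G : Type*} [Group G] [Finite G] {ι : Type*} [Finite ι]
    (L : ι → Subgroup G)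
    (hperm : ∀ (g : G) (i : ι), ∃ j, (L i).map (MulAut.conj g).toMonoidHom = L j) :
    (commutator G ⊔ ⨅ i, Subgroup.normalizer (L i : Set G)).index ≤ 2 ^ (Nat.card ι - 1) := by
  let _ : MulAction G (Subgroup G) := .compHom _ MulAut.conj
  have hstab (H : Subgroup G) : MulAction.stabilizer G H = Subgroup.normalizer (H : Set G) := by
    ext g
    rw [MulAction.mem_stabilizer_iff, Subgroup.mem_normalizer_iff_map_conj_eq]
    rfl
  let Ω : SubMulAction G (Subgroup G) :=
    { carrier := Set.range L
      smul_mem' := by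
        rintro g _ ⟨i, rfl⟩
        exact (hperm g i).imp fun j hj ↦ hj.symm }
  have hkernel :
      ⨅ ω : Ω, MulAction.stabilizer G ω = ⨅ i, Subgroup.normalizer (L i : Set G) := by
    simp_rw [SubMulAction.stabilizer_of_subMul, hstab]
    exact iInf_range' (fun H : Subgroup G ↦ Subgroup.normalizer (H : Set G)) L
  have hcard : Nat.card Ω ≤ Nat.card ι := Finite.card_range_le L
  calc _ = (commutator G ⊔ ⨅ ω : Ω, MulAction.stabilizer G ω).index := by rw [hkernel]
    _ ≤ 2 ^ (Nat.card Ω - 1) :=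
        MulAction.index_commutator_sup_iInf_stabilizer_le_two_pow_card_sub_one
    _ ≤ 2 ^ (Nat.card ι - 1) := Nat.pow_le_pow_right two_pos (by omega)

theorem index_commutator_sup_kernel_le_two_pow
    {G : Type*} [Group G] [Finite G] {ι : Type*} [Finite ι] [Nonempty ι]
    (L : ι → Subgroup G)
    (hsimple : ∀ i, IsSimpleGroup ↥(L i))
    (hnonab : ∀ i, ∃ a b : ↥(L i), a * b ≠ b * a)
    (hcommute : ∀ i j, i ≠ j → ∀ x ∈ L i, ∀ y ∈ L j, Commute x y)
    (hind : ∀ i, Disjoint (L i) (⨆ (j) (_ : j ≠ i), L j))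
    (hN : (⨆ i, L i).Normal)
    (hperm : ∀ (g : G) (i : ι), ∃ j, (L i).map (MulAut.conj g).toMonoidHom = L j)
    (htrans : ∀ i j : ι, ∃ g : G, (L i).map (MulAut.conj g).toMonoidHom = L j)
    (hfaithful : Subgroup.centralizer ((⨆ i, L i : Subgroup G) : Set G) = ⊥) :
    (commutator G ⊔ ⨅ i, Subgroup.normalizer (L i : Set G)).index ≤ 2 ^ (Nat.card ι - 1) :=
  index_commutator_sup_kernel_le_two_pow_general L hperm
end

section
/- Let G be a finite group with layer E(G) and Z = Z(E(G)). Then in the quotient Ḡ = G/Z one has F(Ḡ) = F(G)/Z, E(Ḡ) = E(G)/Z, F*(Ḡ) = F*(G)/Z, and C_Ḡ(E(Ḡ)) = C_G(E(G))/Z. -/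
/-!
Everything holds for any surjection `f : G →* H` whose kernel lies in `Z(E(G))`. The kernel
centralizes every component `L`, and a central quotient of a quasisimple group is quasisimple,
so `f(L)` is a component of `H`. Conversely, if `f(M)` centralizes every `f(L)`, then
`[L, M] ≤ ker f` commutes with `L`, and the three subgroup lemma with `L = [L, L]` gives
`[L, M] = 1`; hence `M ≤ C_G(E(G))`. This applies to the preimage `M` of a component of `H` that is not some `f(L)`
(distinct components commute), of a nilpotent normal subgroup of `H` (components centralize it),
and of `C_H(E(H))`. Such an `M` centralizes `ker f ≤ E(G)`, so `[M, M]` is a component of `G`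
lifting the given component, `M` is nilpotent when its image is, and `M` maps onto `C_H(E(H))`.
-/

/-- The Fitting subgroup: join of all nilpotent normal subgroups. -/
def Fitting (G : Type*) [Group G] : Subgroup G :=
  ⨆ (N : Subgroup G) (_ : N.Normal) (_ : Group.IsNilpotent N), N

/-- Subnormality of a subgroup. -/
def IsSubnormal {G : Type*} [Group G] (H : Subgroup G) : Prop :=
  Relation.ReflTransGen (fun A B : Subgroup G => A ≤ B ∧ (A.subgroupOf B).Normal) H ⊤

/-- A subgroup is quasisimple if it is perfect and simple modulo its center. -/
def IsQuasisimple {G : Type*} [Group G] (L : Subgroup G) : Prop :=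
  commutator ↥L = ⊤ ∧ IsSimpleGroup (↥L ⧸ Subgroup.center ↥L)

/-- The layer `E(G)`: join of all components (subnormal quasisimple subgroups). -/
def Layer (G : Type*) [Group G] : Subgroup G :=
  ⨆ (L : Subgroup G) (_ : IsSubnormal L) (_ : IsQuasisimple L), L

/-- The generalized Fitting subgroup `F*(G) = F(G) E(G)`. -/
def GenFitting (G : Type*) [Group G] : Subgroup G :=
  Fitting G ⊔ Layer G

open Subgroup hiding IsSubnormal
open scoped commutatorElement

section Commutators

variable {G H : Type*} [Group G] [Group H]

theorem commutatorElement_mul_mul_of_commute {x y z w : G} (hzy : Commute z y)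
    (hzw : Commute z w) (hwx : Commute w x) : ⁅x * z, y * w⁆ = ⁅x, y⁆ := by
  have h₁ : z * (y * w) * z⁻¹ = y * w := by rw [((hzy.mul_right hzw).eq), mul_inv_cancel_right]
  have h₂ : w * x⁻¹ * w⁻¹ = x⁻¹ := by rw [hwx.inv_right.eq, mul_inv_cancel_right]
  calc ⁅x * z, y * w⁆ = x * (z * (y * w) * z⁻¹) * (x⁻¹ * w⁻¹ * y⁻¹) := by
        simp only [commutatorElement_def, mul_inv_rev]; group
    _ = x * y * (w * x⁻¹ * w⁻¹) * y⁻¹ := by rw [h₁]; group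
    _ = ⁅x, y⁆ := by rw [h₂, commutatorElement_def]

theorem Subgroup.commutator_le_commutator_of_map_eq {f : G →* H} {D M : Subgroup G}
    (hDM : D ≤ M) (hker : f.ker ≤ centralizer M) (hmap : D.map f = M.map f) :
    ⁅M, M⁆ ≤ ⁅D, D⁆ := by
  have hcomm : ∀ z ∈ f.ker, ∀ g ∈ M, Commute z g := fun z hz g hg =>
    (mem_centralizer_iff.mp (hker hz) g hg).symm
  have hlift : ∀ a ∈ M, ∃ d ∈ D, d⁻¹ * a ∈ f.ker := fun a ha => by
    obtain ⟨d, hd, hda⟩ : f a ∈ D.map f := hmap ▸ mem_map_of_mem f ha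
    exact ⟨d, hd, by simp [MonoidHom.mem_ker, hda]⟩
  rw [commutator_le]
  intro a ha b hb
  obtain ⟨d, hd, hz⟩ := hlift a ha
  obtain ⟨e, he, hw⟩ := hlift b hb
  have key := commutatorElement_mul_mul_of_commute (x := d) (y := e) (hcomm _ hz _ (hDM he))
    (hcomm _ hz _ (mul_mem (inv_mem (hDM he)) hb)) (hcomm _ hw _ (hDM hd))
  rw [mul_inv_cancel_left, mul_inv_cancel_left] at key
  rw [key]
  exact commutator_mem_commutator hd he

theorem Subgroup.commutator_eq_bot_of_perfect {K N : Subgroup G} (hK : ⁅K, K⁆ = K)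
    (h : ⁅⁅K, N⁆, K⁆ = ⊥) : ⁅K, N⁆ = ⊥ := by
  have h' : ⁅⁅N, K⁆, K⁆ = ⊥ := by rwa [commutator_comm N K]
  simpa [hK] using commutator_commutator_eq_bot_of_rotate h h'

theorem Subgroup.comap_center_eq_center [Group.IsPerfect G] {f : G →* H}
    (hf : Function.Surjective f) (hker : f.ker ≤ center G) : (center H).comap f = center G := by
  refine le_antisymm (fun x hx => ?_) (fun x hx => ?_)
  · rw [← Group.IsPerfect.upperCentralSeries_eq_center G two_ne_zero,
      mem_upperCentralSeries_succ_iff, upperCentralSeries_one]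
    intro y
    apply hker
    rw [MonoidHom.mem_ker, map_commutatorElement, commutatorElement_eq_one_iff_commute]
    exact (mem_center_iff.mp hx (f y)).symm
  · rw [mem_comap, mem_center_iff]
    intro h
    obtain ⟨y, rfl⟩ := hf h
    rw [← map_mul, ← map_mul, mem_center_iff.mp hx y]

theorem MonoidHom.ker_subgroupMap_le_center {f : G →* H} {L : Subgroup G}
    (hker : f.ker ≤ centralizer L) : (f.subgroupMap L).ker ≤ center L := by
  rw [ker_subgroupMap]
  intro x hx
  rw [mem_center_iff]
  rintro ⟨y, hy⟩
  exact Subtype.ext (mem_centralizer_iff.mp (hker (mem_subgroupOf.mp hx)) y hy)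

end Commutators

/-- `IsQuasisimple L` unfolds to `IsQuasisimpleGroup L`. -/
def IsQuasisimpleGroup (A : Type*) [Group A] : Prop :=
  commutator A = ⊤ ∧ IsSimpleGroup (A ⧸ center A)

namespace IsQuasisimpleGroup

variable {A B : Type*} [Group A] [Group B]

theorem isPerfect (hA : IsQuasisimpleGroup A) : Group.IsPerfect A := ⟨hA.1⟩

theorem nontrivial (hA : IsQuasisimpleGroup A) : Nontrivial A :=
  have := hA.2.toNontrivial
  (QuotientGroup.mk'_surjective (center A)).nontrivial

theorem not_isNilpotent (hA : IsQuasisimpleGroup A) : ¬Group.IsNilpotent A :=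
  have := hA.isPerfect
  have := hA.nontrivial
  Group.IsPerfect.not_isNilpotent A

theorem le_center_or_eq_top (hA : IsQuasisimpleGroup A) (N : Subgroup A) [N.Normal] :
    N ≤ center A ∨ N = ⊤ := by
  set π := QuotientGroup.mk' (center A)
  rcases hA.2.eq_bot_or_eq_top_of_normal (N.map π)
      (Normal.map ‹_› π (QuotientGroup.mk'_surjective _)) with h | h
  · left
    rwa [Subgroup.map_eq_bot_iff, QuotientGroup.ker_mk'] at h
  · right
    have hmap : N.map π = (⊤ : Subgroup A).map π := by
      rw [h, map_top_of_surjective π (QuotientGroup.mk'_surjective _)]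
    have hle := commutator_le_commutator_of_map_eq le_top
      (by rw [QuotientGroup.ker_mk', coe_top, centralizer_univ]) hmap
    rw [← _root_.commutator_def, hA.1] at hle
    exact eq_top_iff.mpr (hle.trans (commutator_le_left N N))

theorem iff_of_surjective [Group.IsPerfect A] {f : A →* B} (hf : Function.Surjective f)
    (hker : f.ker ≤ center A) : IsQuasisimpleGroup A ↔ IsQuasisimpleGroup B := by
  have hcenter : center A = ((QuotientGroup.mk' (center B)).comp f).ker := by
    rw [← MonoidHom.comap_ker, QuotientGroup.ker_mk', comap_center_eq_center hf hker]
  have e : A ⧸ center A ≃* B ⧸ center B :=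
    (QuotientGroup.quotientMulEquivOfEq hcenter).trans
      (QuotientGroup.quotientKerEquivOfSurjective _ ((QuotientGroup.mk'_surjective _).comp hf))
  have := Group.IsPerfect.ofSurjective hf
  simp only [IsQuasisimpleGroup, Group.IsPerfect.commutator_eq_top, true_and]
  exact e.isSimpleGroup_congr

end IsQuasisimpleGroup

namespace IsQuasisimple

variable {G H : Type*} [Group G] [Group H] {K L N : Subgroup G}

theorem commutator_eq_self (hL : IsQuasisimple L) : ⁅L, L⁆ = L :=
  isPerfect_iff.mp ⟨hL.1⟩

theorem le_or_commutator_eq_bot (hK : IsQuasisimple K) (hNK : N ≤ K)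
    (hN : (N.subgroupOf K).Normal) : K ≤ N ∨ ⁅K, N⁆ = ⊥ := by
  rcases IsQuasisimpleGroup.le_center_or_eq_top hK (N.subgroupOf K) with h | h
  · right
    rw [commutator_eq_bot_iff_le_centralizer]
    intro k hk
    rw [mem_centralizer_iff]
    intro n hn
    exact congrArg Subtype.val
      (mem_center_iff.mp (h (x := ⟨n, hNK hn⟩) (mem_subgroupOf.mpr hn)) ⟨k, hk⟩).symm
  · exact Or.inl (subgroupOf_eq_top.mp h)

theorem map (hL : IsQuasisimple L) {f : G →* H} (hker : f.ker ≤ centralizer L) :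
    IsQuasisimple (L.map f) :=
  have : Group.IsPerfect L := ⟨hL.1⟩
  (IsQuasisimpleGroup.iff_of_surjective (f.subgroupMap_surjective L)
    (f.ker_subgroupMap_le_center hker)).mp hL

theorem of_map (hL : ⁅L, L⁆ = L) {f : G →* H} (hker : f.ker ≤ centralizer L)
    (h : IsQuasisimple (L.map f)) : IsQuasisimple L :=
  have : Group.IsPerfect L := isPerfect_iff.mpr hL
  (IsQuasisimpleGroup.iff_of_surjective (f.subgroupMap_surjective L)
    (f.ker_subgroupMap_le_center hker)).mpr h

end IsQuasisimple

section Subnormal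

variable {G : Type*} [Group G] {H K L N : Subgroup G}

/-- Subnormality relative to a subgroup `K`, through a chain of subgroups of `G` itself, so that
`IsSubnormal H` is `SubnormalIn H ⊤`. -/
def SubnormalIn (H K : Subgroup G) : Prop :=
  Relation.ReflTransGen (fun A B : Subgroup G => A ≤ B ∧ (A.subgroupOf B).Normal) H K

theorem isSubnormal_iff_subgroup_isSubnormal : IsSubnormal H ↔ H.IsSubnormal := by
  constructor
  · intro h
    induction h using Relation.ReflTransGen.head_induction_on with
    | refl => exact .top
    | head hAB _ ih => exact .step _ _ hAB.1 ih hAB.2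
  · intro h
    induction h with
    | top => exact .refl
    | step A B hAB _ hN ih => exact .head ⟨hAB, hN⟩ ih

namespace SubnormalIn

theorem le (h : SubnormalIn H K) : H ≤ K := by
  induction h with
  | refl => exact le_rfl
  | tail _ hstep ih => exact ih.trans hstep.1

theorem of_le_of_le {B : Subgroup G} (h : SubnormalIn H K) (hHB : H ≤ B) (hBK : B ≤ K) :
    SubnormalIn H B := by
  have : SubnormalIn (H ⊓ B) (K ⊓ B) := Relation.ReflTransGen.lift (· ⊓ B)
    (fun A A' hA =>
      ⟨inf_le_inf_right B hA.1, @inf_subgroupOf_inf_normal_of_left _ _ _ _ B hA.2⟩) _ _ h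
  rwa [inf_eq_left.mpr hHB, inf_eq_right.mpr hBK] at this

theorem eq_or_commutator_eq_bot (h : SubnormalIn L K) (hK : IsQuasisimple K) :
    L = K ∨ ⁅K, L⁆ = ⊥ := by
  induction h using Relation.ReflTransGen.head_induction_on with
  | refl => exact Or.inl rfl
  | head hAC hCK ih =>
    rcases ih with rfl | hbot
    · exact (hK.le_or_commutator_eq_bot hAC.1 hAC.2).imp_left (le_antisymm hAC.1)
    · exact Or.inr (eq_bot_iff.mpr (hbot ▸ commutator_mono le_rfl hAC.1))

theorem le_or_commutator_eq_bot (h : SubnormalIn K H) (hK : IsQuasisimple K) (hNH : N ≤ H)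
    (hN : (N.subgroupOf H).Normal) : K ≤ N ∨ ⁅K, N⁆ = ⊥ := by
  induction h generalizing N with
  | refl => exact hK.le_or_commutator_eq_bot hNH hN
  | @tail B C hKB hBC ih =>
    have hNB : ((N ⊓ B).subgroupOf B).Normal := by
      have := @inf_subgroupOf_inf_normal_of_left _ _ _ _ B hN
      rwa [inf_eq_right.mpr hBC.1] at this
    refine (ih inf_le_right hNB).imp (fun hle => hle.trans inf_le_left) fun hbot => ?_
    have hKB' : K ≤ B := SubnormalIn.le hKB
    have hCN : C ≤ normalizer N := (normal_subgroupOf_iff_le_normalizer hNH).mp hN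
    have hCB : C ≤ normalizer B := (normal_subgroupOf_iff_le_normalizer hBC.1).mp hBC.2
    have hKN : ⁅K, N⁆ ≤ N ⊓ B := le_inf
      (le_normalizer_iff_commutator_le_right.mp ((hKB'.trans hBC.1).trans hCN))
      ((commutator_mono hKB' le_rfl).trans
        (le_normalizer_iff_commutator_le_left.mp (hNH.trans hCB)))
    refine commutator_eq_bot_of_perfect hK.commutator_eq_self (eq_bot_iff.mpr ?_)
    calc ⁅⁅K, N⁆, K⁆ ≤ ⁅N ⊓ B, K⁆ := commutator_mono hKN le_rfl
      _ = ⊥ := by rw [commutator_comm, hbot]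

theorem commutator_eq_bot_of_ne (hK : SubnormalIn K H) (hKq : IsQuasisimple K)
    (hL : SubnormalIn L H) (hLq : IsQuasisimple L) (hne : K ≠ L) : ⁅K, L⁆ = ⊥ := by
  induction hK generalizing L with
  | refl => exact (hL.eq_or_commutator_eq_bot hKq).resolve_left hne.symm
  | @tail B C hKB hBC ih =>
    rcases hL.le_or_commutator_eq_bot hLq hBC.1 hBC.2 with hLB | hbot
    · exact ih (hL.of_le_of_le hLB hBC.1) hLq hne
    · rw [eq_bot_iff, commutator_comm, ← hbot]
      exact commutator_mono le_rfl (SubnormalIn.le hKB)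

end SubnormalIn

end Subnormal

section Components

variable {G H : Type*} [Group G] [Group H] {K L N X : Subgroup G}

structure IsComponent (L : Subgroup G) : Prop where
  isSubnormal : IsSubnormal L
  isQuasisimple : IsQuasisimple L

theorem IsComponent.le_layer (hL : IsComponent L) : L ≤ Layer G :=
  le_iSup_of_le L (le_iSup_of_le hL.1 (le_iSup_of_le hL.2 le_rfl))

theorem layer_le (h : ∀ L, IsComponent L → L ≤ X) : Layer G ≤ X :=
  iSup_le fun L => iSup_le fun h₁ => iSup_le fun h₂ => h L ⟨h₁, h₂⟩

namespace IsComponent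

theorem commutator_eq_bot_of_ne (hK : IsComponent K) (hL : IsComponent L) (hne : K ≠ L) :
    ⁅K, L⁆ = ⊥ :=
  SubnormalIn.commutator_eq_bot_of_ne hK.1 hK.2 hL.1 hL.2 hne

theorem commutator_eq_bot_of_isNilpotent (hK : IsComponent K) (hN : N.Normal)
    [Group.IsNilpotent N] : ⁅K, N⁆ = ⊥ := by
  refine (SubnormalIn.le_or_commutator_eq_bot hK.1 hK.2 le_top normal_subgroupOf).resolve_left
    fun hKN => IsQuasisimpleGroup.not_isNilpotent hK.2 ?_
  exact (Group.isNilpotent_congr (subgroupOfEquivOfLe hKN)).mp inferInstance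

theorem map (hL : IsComponent L) {f : G →* H} (hf : Function.Surjective f)
    (hker : f.ker ≤ centralizer L) : IsComponent (L.map f) :=
  ⟨isSubnormal_iff_subgroup_isSubnormal.mpr
    ((isSubnormal_iff_subgroup_isSubnormal.mp hL.1).map hf), hL.2.map hker⟩

/-- The lift is the commutator subgroup of the preimage, which is perfect because the kernel is
central in the preimage. -/
theorem exists_map_eq_of_ker_le_centralizer {K : Subgroup H} (hK : IsComponent K) {f : G →* H}
    (hf : Function.Surjective f) (hker : f.ker ≤ centralizer (K.comap f)) :
    ∃ D, IsComponent D ∧ D.map f = K := by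
  set M := K.comap f
  have hMK : M.map f = K := map_comap_eq_self_of_surjective hf K
  have hDK : ⁅M, M⁆.map f = K := by
    rw [map_commutator, hMK, hK.2.commutator_eq_self]
  have hDM : ⁅M, M⁆ ≤ M := le_normalizer_iff_commutator_le_left.mp le_normalizer
  have hperf : ⁅⁅M, M⁆, ⁅M, M⁆⁆ = ⁅M, M⁆ := le_antisymm (commutator_mono hDM hDM)
    (commutator_le_commutator_of_map_eq hDM hker (hDK.trans hMK.symm))
  have hnormal : (⁅M, M⁆.subgroupOf M).Normal := (normal_subgroupOf_iff_le_normalizer hDM).mpr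
    (le_normalizer_iff_commutator_le_left.mpr (commutator_mono hDM le_rfl))
  refine ⟨⁅M, M⁆, ⟨.head ⟨hDM, hnormal⟩ ?_, ?_⟩, hDK⟩
  · exact isSubnormal_iff_subgroup_isSubnormal.mpr
      ((isSubnormal_iff_subgroup_isSubnormal.mp hK.1).comap f)
  · exact IsQuasisimple.of_map hperf (hker.trans (centralizer_le hDM)) (hDK ▸ hK.2)

end IsComponent

end Components

section Fitting

variable {G H : Type*} [Group G] [Group H] {N X : Subgroup G}

theorem le_fitting [N.Normal] [Group.IsNilpotent N] : N ≤ Fitting G :=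
  le_iSup_of_le N (le_iSup_of_le ‹_› (le_iSup_of_le ‹_› le_rfl))

theorem fitting_le (h : ∀ N : Subgroup G, N.Normal → Group.IsNilpotent N → N ≤ X) :
    Fitting G ≤ X :=
  iSup_le fun N => iSup_le fun h₁ => iSup_le fun h₂ => h N h₁ h₂

theorem map_fitting_le {f : G →* H} (hf : Function.Surjective f) :
    (Fitting G).map f ≤ Fitting H := by
  rw [map_le_iff_le_comap]
  refine fitting_le fun N hN hnil => ?_
  rw [← map_le_iff_le_comap]
  have := hN.map f hf
  have := Group.nilpotent_of_surjective (f.subgroupMap N) (f.subgroupMap_surjective N)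
  exact le_fitting

end Fitting

section CentralQuotient

variable {G H : Type*} [Group G] [Group H] {f : G →* H}

theorem le_centralizer_layer_of_commutator_map_eq_bot (hker : f.ker ≤ centralizer (Layer G))
    {M : Subgroup G} (h : ∀ L, IsComponent L → ⁅M.map f, L.map f⁆ = ⊥) :
    M ≤ centralizer (Layer G) := by
  rw [le_centralizer_iff]
  refine layer_le fun L hL => ?_
  rw [← commutator_eq_bot_iff_le_centralizer]
  refine commutator_eq_bot_of_perfect hL.2.commutator_eq_self ?_
  rw [commutator_eq_bot_iff_le_centralizer]
  have hLM : ⁅L, M⁆ ≤ f.ker := by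
    rw [← Subgroup.map_eq_bot_iff, map_commutator, commutator_comm, h L hL]
  exact hLM.trans (hker.trans (centralizer_le hL.le_layer))

theorem IsComponent.map_of_ker_le (hf : Function.Surjective f)
    (hker : f.ker ≤ Layer G ⊓ centralizer (Layer G)) {L : Subgroup G}
    (hL : IsComponent L) : IsComponent (L.map f) :=
  hL.map hf ((le_inf_iff.mp hker).2.trans (centralizer_le hL.le_layer))

theorem exists_isComponent_map_eq (hf : Function.Surjective f)
    (hker : f.ker ≤ Layer G ⊓ centralizer (Layer G)) {K : Subgroup H} (hK : IsComponent K) :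
    ∃ D, IsComponent D ∧ D.map f = K := by
  by_cases hlift : ∃ L, IsComponent L ∧ L.map f = K
  · exact hlift
  have hM : K.comap f ≤ centralizer (Layer G) :=
    le_centralizer_layer_of_commutator_map_eq_bot (le_inf_iff.mp hker).2 fun L hL => by
      rw [map_comap_eq_self_of_surjective hf]
      exact hK.commutator_eq_bot_of_ne (hL.map_of_ker_le hf hker)
        fun h => hlift ⟨L, hL, h.symm⟩
  exact hK.exists_map_eq_of_ker_le_centralizer hf
    ((le_inf_iff.mp hker).1.trans (le_centralizer_iff.mp hM))

theorem map_layer_eq (hf : Function.Surjective f)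
    (hker : f.ker ≤ Layer G ⊓ centralizer (Layer G)) : (Layer G).map f = Layer H := by
  refine le_antisymm (map_le_iff_le_comap.mpr (layer_le fun L hL => ?_)) (layer_le fun K hK => ?_)
  · exact map_le_iff_le_comap.mp (hL.map_of_ker_le hf hker).le_layer
  · obtain ⟨D, hD, rfl⟩ := exists_isComponent_map_eq hf hker hK
    exact map_mono hD.le_layer

theorem fitting_le_map_fitting (hf : Function.Surjective f)
    (hker : f.ker ≤ Layer G ⊓ centralizer (Layer G)) : Fitting H ≤ (Fitting G).map f := by
  refine fitting_le fun N hN hnil => ?_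
  have hM : N.comap f ≤ centralizer (Layer G) :=
    le_centralizer_layer_of_commutator_map_eq_bot (le_inf_iff.mp hker).2 fun L hL => by
      rw [map_comap_eq_self_of_surjective hf, commutator_comm]
      exact (hL.map_of_ker_le hf hker).commutator_eq_bot_of_isNilpotent hN
  have : Group.IsNilpotent ((N.comap f).map f) := by rwa [map_comap_eq_self_of_surjective hf]
  have : Group.IsNilpotent (N.comap f) :=
    Subgroup.isNilpotent_of_ker_le_center (f.subgroupMap _) (f.ker_subgroupMap_le_center
      ((le_inf_iff.mp hker).1.trans (le_centralizer_iff.mp hM)))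
  have := hN.comap f
  rw [← map_comap_eq_self_of_surjective hf N]
  exact map_mono le_fitting

theorem map_centralizer_layer_eq (hf : Function.Surjective f)
    (hker : f.ker ≤ Layer G ⊓ centralizer (Layer G)) :
    (centralizer (Layer G)).map f = centralizer (Layer H) := by
  rw [← map_layer_eq hf hker]
  refine le_antisymm (map_centralizer_le_centralizer_image _ f) ?_
  rw [← map_comap_eq_self_of_surjective hf (centralizer _)]
  refine map_mono (le_centralizer_layer_of_commutator_map_eq_bot (le_inf_iff.mp hker).2
    fun L hL => ?_)
  rw [map_comap_eq_self_of_surjective hf, commutator_eq_bot_iff_le_centralizer]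
  exact centralizer_le (map_mono hL.le_layer)

end CentralQuotient

theorem quotient_center_layer_preserves_fitting_layer_general
    (G : Type*) [Group G] (Z : Subgroup G)
    (hZ : Z = Layer G ⊓ Subgroup.centralizer ((Layer G : Subgroup G) : Set G))
    [Z.Normal] :
    Subgroup.map (QuotientGroup.mk' Z) (Fitting G) = Fitting (G ⧸ Z) ∧
      Subgroup.map (QuotientGroup.mk' Z) (Layer G) = Layer (G ⧸ Z) ∧
      Subgroup.map (QuotientGroup.mk' Z) (GenFitting G) = GenFitting (G ⧸ Z) ∧
      Subgroup.map (QuotientGroup.mk' Z)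
          (Subgroup.centralizer ((Layer G : Subgroup G) : Set G))
        = Subgroup.centralizer ((Layer (G ⧸ Z) : Subgroup (G ⧸ Z)) : Set (G ⧸ Z)) := by
  have hf := QuotientGroup.mk'_surjective Z
  have hker : (QuotientGroup.mk' Z).ker ≤ Layer G ⊓ centralizer (Layer G) := by
    rw [QuotientGroup.ker_mk', hZ]
  have hF := le_antisymm (map_fitting_le hf) (fitting_le_map_fitting hf hker)
  have hE := map_layer_eq hf hker
  refine ⟨hF, hE, ?_, map_centralizer_layer_eq hf hker⟩
  rw [GenFitting, GenFitting, Subgroup.map_sup, hF, hE]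

theorem quotient_center_layer_preserves_fitting_layer
    (G : Type*) [Group G] [Finite G] (Z : Subgroup G)
    (hZ : Z = Layer G ⊓ Subgroup.centralizer ((Layer G : Subgroup G) : Set G))
    [Z.Normal] :
    Subgroup.map (QuotientGroup.mk' Z) (Fitting G) = Fitting (G ⧸ Z) ∧
      Subgroup.map (QuotientGroup.mk' Z) (Layer G) = Layer (G ⧸ Z) ∧
      Subgroup.map (QuotientGroup.mk' Z) (GenFitting G) = GenFitting (G ⧸ Z) ∧
      Subgroup.map (QuotientGroup.mk' Z)
          (Subgroup.centralizer ((Layer G : Subgroup G) : Set G))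
        = Subgroup.centralizer ((Layer (G ⧸ Z) : Subgroup (G ⧸ Z)) : Set (G ⧸ Z)) :=
  quotient_center_layer_preserves_fitting_layer_general G Z hZ
end

section
/- Let H be a finite group acting faithfully on a finite group V of order coprime arranged as a direct product of its Sylow subgroups P₁,...,P_l, such that for each i the image H/C_H(P_i) is a p_i-group (p_i the prime of P_i). Then H is nilpotent, and the semidirect product HV is nilpotent. -/
/-!
Each Sylow subgroup `Q` of `V` is characteristic, so its pointwise stabiliser `C_H(Q)` is normal in
`H` with `H ⧸ C_H(Q)` a `q`-group; faithfulness makes `H` a subdirect product of these, hence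
nilpotent. A `p`-element `g` of `H` lies in the subgroup generated by `g ^ q ^ k` for every prime
`q ≠ p`, so it fixes every Sylow `q`-subgroup of `V` pointwise and thus acts trivially on `V`
modulo its Sylow `p`-subgroup `V_p`. This makes `V_p ⋊ H_p` normal in `V ⋊ H`, and by its order it
is a Sylow `p`-subgroup; so all Sylow subgroups of `V ⋊ H` are normal.
-/

open Subgroup Pointwise

theorem Subgroup.mem_of_pow_mem_of_pow_eq_one {H : Type*} [Group H] {C : Subgroup H} {g : H}
    {p q m k : ℕ} (hpq : p.Coprime q) (hg : g ^ p ^ m = 1) (hC : g ^ q ^ k ∈ C) : g ∈ C := by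
  have hcop : (q ^ k).Coprime (orderOf g) :=
    (Nat.Coprime.pow k m hpq.symm).coprime_dvd_right (orderOf_dvd_of_pow_eq_one hg)
  obtain ⟨n, hn⟩ := exists_pow_eq_self_of_coprime hcop
  exact hn ▸ C.pow_mem hC n

theorem Subgroup.Characteristic.apply_mem {G : Type*} [Group G] {K : Subgroup G}
    (hK : K.Characteristic) (e : MulAut G) {x : G} (hx : x ∈ K) : e x ∈ K :=
  characteristic_iff_le_comap.mp hK e hx

theorem Subgroup.eq_top_of_exists_sylow_le {G : Type*} [Group G] [Finite G] {F : Subgroup G}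
    (h : ∀ q ∈ (Nat.card G).primeFactors, ∃ Q : Sylow q G, (Q : Subgroup G) ≤ F) : F = ⊤ := by
  refine eq_top_of_card_eq F <| Nat.dvd_antisymm (card_subgroup_dvd_card F) ?_
  rw [← Nat.factorization_le_iff_dvd Nat.card_pos.ne' Nat.card_pos.ne']
  intro q
  by_cases hq : q ∈ (Nat.card G).primeFactors
  · have := Fact.mk (Nat.prime_of_mem_primeFactors hq)
    obtain ⟨Q, hQF⟩ := h q hq
    have hdvd : q ^ (Nat.card G).factorization q ∣ Nat.card F :=
      Q.card_eq_multiplicity ▸ card_dvd_of_le hQF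
    exact (this.out.pow_dvd_iff_le_factorization Nat.card_pos.ne').mp hdvd
  · simp [Finsupp.notMem_support_iff.mp (Nat.support_factorization _ ▸ hq)]

namespace MulAut

variable {V : Type*} [Group V]

def fixedSubgroup (u : MulAut V) : Subgroup V :=
  u.toMonoidHom.eqLocus (MonoidHom.id V)

@[simp]
theorem mem_fixedSubgroup {u : MulAut V} {x : V} : x ∈ u.fixedSubgroup ↔ u x = x :=
  Iff.rfl

theorem eq_one_of_fixedSubgroup_eq_top {u : MulAut V} (h : u.fixedSubgroup = ⊤) : u = 1 :=
  MulEquiv.ext fun x => mem_fixedSubgroup.mp (h ▸ mem_top x)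

theorem fixingSubgroup_normal (Q : Subgroup V) [hQ : Q.Characteristic] :
    (fixingSubgroup (MulAut V) (Q : Set V)).Normal where
  conj_mem u hu e := (mem_fixingSubgroup_iff _).mpr fun x hx => by
    have hux : u (e⁻¹ x) = e⁻¹ x := (mem_fixingSubgroup_iff _).mp hu _ (hQ.apply_mem e⁻¹ hx)
    rw [MulAut.smul_def, mul_apply, mul_apply, hux, apply_inv_self]

theorem mul_inv_apply_mem_sylow [Finite V] {p : ℕ} [Fact p.Prime] (P : Sylow p V) [P.Normal]
    (u : MulAut V) (hu : ∀ q ∈ (Nat.card V).primeFactors, q ≠ p →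
      ∃ Q : Sylow q V, (Q : Subgroup V) ≤ u.fixedSubgroup) (v : V) : v * (u v)⁻¹ ∈ P := by
  have hsup : (P : Subgroup V) ⊔ u.fixedSubgroup = ⊤ := by
    refine eq_top_of_exists_sylow_le fun q hq => ?_
    obtain rfl | hqp := eq_or_ne q p
    · exact ⟨P, le_sup_left⟩
    · obtain ⟨Q, hQ⟩ := hu q hq hqp
      exact ⟨Q, hQ.trans le_sup_right⟩
  obtain ⟨a, ha, c, hc, rfl⟩ : v ∈ ((P : Subgroup V) : Set V) * u.fixedSubgroup := by
    rw [← normal_mul, hsup]; trivial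
  have hua : u a ∈ P := (Sylow.characteristic_of_normal P ‹_›).apply_mem u ha
  rw [map_mul, mem_fixedSubgroup.mp hc, mul_inv_rev, mul_assoc, mul_inv_cancel_left]
  exact P.mul_mem ha (P.inv_mem hua)

end MulAut

theorem Group.isNilpotent_of_iInf_eq_bot {G ι : Type*} [Group G] [Finite ι] (N : ι → Subgroup G)
    [∀ i, (N i).Normal] [∀ i, IsNilpotent (G ⧸ N i)] (h : ⨅ i, N i = ⊥) : IsNilpotent G := by
  let f : G →* ∀ i, G ⧸ N i := MonoidHom.pi fun i => QuotientGroup.mk' (N i)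
  have hf : Function.Injective f := by
    rw [← MonoidHom.ker_eq_bot_iff, ← h]
    ext g
    simp [f, mem_iInf, funext_iff, QuotientGroup.eq_one_iff]
  exact (isNilpotent_congr (MonoidHom.ofInjective hf)).mpr inferInstance

namespace SemidirectProduct

variable {N G : Type*} [Group N] [Group G] {φ : G →* MulAut N}

def prodSubgroup (A : Subgroup N) (B : Subgroup G) (hA : ∀ g ∈ B, ∀ a ∈ A, φ g a ∈ A) :
    Subgroup (N ⋊[φ] G) where
  carrier := {x | x.left ∈ A ∧ x.right ∈ B}
  one_mem' := ⟨A.one_mem, B.one_mem⟩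
  mul_mem' := fun ⟨ha, hb⟩ ⟨ha', hb'⟩ => ⟨A.mul_mem ha (hA _ hb _ ha'), B.mul_mem hb hb'⟩
  inv_mem' := fun ⟨ha, hb⟩ => ⟨hA _ (B.inv_mem hb) _ (A.inv_mem ha), B.inv_mem hb⟩

variable {A : Subgroup N} {B : Subgroup G}

theorem mem_prodSubgroup {hA : ∀ g ∈ B, ∀ a ∈ A, φ g a ∈ A} {x : N ⋊[φ] G} :
    x ∈ prodSubgroup A B hA ↔ x.left ∈ A ∧ x.right ∈ B :=
  Iff.rfl

theorem card_prodSubgroup (hA : ∀ g ∈ B, ∀ a ∈ A, φ g a ∈ A) :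
    Nat.card (prodSubgroup A B hA) = Nat.card A * Nat.card B := by
  let e : prodSubgroup A B hA ≃ A × B :=
    { toFun x := (⟨x.1.left, x.2.1⟩, ⟨x.1.right, x.2.2⟩)
      invFun y := ⟨⟨y.1, y.2⟩, y.1.2, y.2.2⟩ }
  rw [Nat.card_congr e, Nat.card_prod]

theorem prodSubgroup_normal [A.Normal] [B.Normal] (hA : ∀ g, ∀ a ∈ A, φ g a ∈ A)
    (hB : ∀ g ∈ B, ∀ n, n * (φ g n)⁻¹ ∈ A) : (prodSubgroup A B fun g _ => hA g).Normal where
  conj_mem := by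
    rintro ⟨a, b⟩ hx ⟨v, h⟩
    obtain ⟨ha, hb⟩ : a ∈ A ∧ b ∈ B := mem_prodSubgroup.mp hx
    have hb' : h * b * h⁻¹ ∈ B := Normal.conj_mem ‹_› _ hb _
    refine mem_prodSubgroup.mpr ⟨?_, hb'⟩
    have hleft : (⟨v, h⟩ * ⟨a, b⟩ * ⟨v, h⟩⁻¹ : N ⋊[φ] G).left =
        v * (φ (h * b * h⁻¹) v)⁻¹ * (φ (h * b * h⁻¹) v * φ h a * (φ (h * b * h⁻¹) v)⁻¹) := by
      simp only [mul_left, mul_right, inv_left, map_mul, MulAut.mul_apply, map_inv]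
      group
    rw [hleft]
    exact A.mul_mem (hB _ hb' v) (Normal.conj_mem ‹_› _ (hA h a ha) _)

theorem isNilpotent_of_forall_sylow [Finite N] [Finite G] [Group.IsNilpotent N]
    [Group.IsNilpotent G]
    (h : ∀ (p : ℕ) [Fact p.Prime] (P : Sylow p N) (Q : Sylow p G),
      ∀ g ∈ Q, ∀ n, n * (φ g n)⁻¹ ∈ P) :
    Group.IsNilpotent (N ⋊[φ] G) := by
  have : Finite (N ⋊[φ] G) := Finite.of_equiv _ equivProd.symm
  refine (Group.isNilpotent_of_finite_tfae.out 3 0).mp ?_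
  intro p _ P
  let A : Sylow p N := default
  let B : Sylow p G := default
  have hA : ∀ g, ∀ a ∈ (A : Subgroup N), φ g a ∈ A := fun g _ =>
    (Sylow.characteristic_of_normal A inferInstance).apply_mem (φ g)
  have hK := prodSubgroup_normal hA (h p A B)
  have hcard : Nat.card (prodSubgroup (A : Subgroup N) B fun g _ => hA g) =
      p ^ (Nat.card (N ⋊[φ] G)).factorization p := by
    rw [card_prodSubgroup, A.card_eq_multiplicity, B.card_eq_multiplicity, card, ← pow_add,
      Nat.factorization_mul (Nat.card_pos (α := N)).ne' (Nat.card_pos (α := G)).ne',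
      Finsupp.add_apply]
  let := Sylow.unique_of_normal (Sylow.ofCard _ hcard) hK
  exact Subsingleton.elim (Sylow.ofCard _ hcard) P ▸ hK

end SemidirectProduct

theorem Group.isNilpotent_of_injective_of_forall_sylow {H V : Type*} [Group H] [Finite H]
    [Group V] [Finite V] [Group.IsNilpotent V] {φ : H →* MulAut V} (hφ : Function.Injective φ)
    (h : ∀ (q : ℕ) [Fact q.Prime] (Q : Sylow q V) (g : H),
      ∃ k : ℕ, ∀ x ∈ (Q : Subgroup V), φ (g ^ q ^ k) x = x) :
    Group.IsNilpotent H := by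
  let ι := Σ q : (Nat.card V).primeFactors, Sylow q V
  have (Q : ι) : Fact (Q.1 : ℕ).Prime := ⟨Nat.prime_of_mem_primeFactors Q.1.2⟩
  let C (Q : ι) : Subgroup H := (fixingSubgroup (MulAut V) (Q.2 : Set V)).comap φ
  have (Q : ι) : (C Q).Normal :=
    have := Sylow.characteristic_of_normal Q.2 inferInstance
    (MulAut.fixingSubgroup_normal _).comap φ
  have (Q : ι) : Group.IsNilpotent (H ⧸ C Q) := by
    refine IsPGroup.isNilpotent (p := Q.1) fun g => QuotientGroup.induction_on g fun g => ?_
    obtain ⟨k, hk⟩ := h Q.1 Q.2 g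
    exact ⟨k, (QuotientGroup.eq_one_iff _).mpr ((mem_fixingSubgroup_iff _).mpr hk)⟩
  refine isNilpotent_of_iInf_eq_bot C (eq_bot_iff.mpr fun g hg => ?_)
  suffices (φ g).fixedSubgroup = ⊤ from
    hφ (MulAut.eq_one_of_fixedSubgroup_eq_top this ▸ φ.map_one.symm)
  refine eq_top_of_exists_sylow_le fun q hq => ?_
  have := Fact.mk (Nat.prime_of_mem_primeFactors hq)
  exact ⟨default, (mem_fixingSubgroup_iff _).mp (mem_iInf.mp hg ⟨⟨q, hq⟩, default⟩)⟩

theorem isNilpotent_of_pGroup_action_on_sylows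
    (H V : Type*) [Group H] [Finite H] [Group V] [Finite V] [Group.IsNilpotent V]
    (φ : H →* MulAut V) (hφ : Function.Injective φ)
    (hpq : ∀ q : ℕ, q.Prime → ∀ Q : Sylow q V, ∀ g : H,
      ∃ k : ℕ, ∀ x ∈ (Q : Subgroup V), φ (g ^ q ^ k) x = x) :
    Group.IsNilpotent H ∧ Group.IsNilpotent (V ⋊[φ] H) := by
  have hH := Group.isNilpotent_of_injective_of_forall_sylow hφ fun q _ => hpq q Fact.out
  refine ⟨hH, SemidirectProduct.isNilpotent_of_forall_sylow fun p _ P S g hg v =>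
    MulAut.mul_inv_apply_mem_sylow P (φ g) (fun q hq hqp => ?_) v⟩
  have hq_prime := Nat.prime_of_mem_primeFactors hq
  have := Fact.mk hq_prime
  obtain ⟨m, hm⟩ := S.isPGroup' ⟨g, hg⟩
  obtain ⟨k, hk⟩ := hpq q hq_prime default g
  have hfix : g ∈ (fixingSubgroup (MulAut V) ((default : Sylow q V) : Set V)).comap φ :=
    mem_of_pow_mem_of_pow_eq_one ((Nat.coprime_primes Fact.out hq_prime).mpr hqp.symm)
      (by simpa using congrArg Subtype.val hm) ((mem_fixingSubgroup_iff _).mpr hk)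
  exact ⟨default, (mem_fixingSubgroup_iff _).mp hfix⟩
end
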